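/- Let G be an expandable finite simple graph that has a perfect matching. Then η(G) = |V(G)| − ω(G), where ω(G) is the clique number of G. -/

import Mathlib

open SimpleGraph

variable {V : Type*}

/-- `M` is a matching in `G`: a set of pairwise vertex-disjoint edges of `G`. -/
def IsMatchingIn (G : SimpleGraph V) (M : Finset (Sym2 V)) : Prop :=
  (∀ e ∈ M, e ∈ G.edgeSet) ∧
    ∀ e ∈ M, ∀ f ∈ M, e ≠ f → ∀ v : V, v ∈ e → v ∉ f

/-- `M` is a maximal matching in `G`: a matching not properly contained in another matching. -/
def IsMaximalMatchingIn (G : SimpleGraph V) (M : Finset (Sym2 V)) : Prop :=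
  IsMatchingIn G M ∧ ∀ M', IsMatchingIn G M' → M ⊆ M' → M' = M

/-- `M` saturates (covers) the vertex `v`. -/
def Sat (M : Finset (Sym2 V)) (v : V) : Prop := ∃ e ∈ M, v ∈ e

/-- The matching number `ν(G)`. -/
noncomputable def nuNum (G : SimpleGraph V) : ℕ :=
  sSup {n | ∃ M, IsMatchingIn G M ∧ M.card = n}

/-- The minimum maximal matching number `β(G)`. -/
noncomputable def betaNum (G : SimpleGraph V) : ℕ :=
  sInf {n | ∃ M, IsMaximalMatchingIn G M ∧ M.card = n}

/-- The matching gap `μ(G) = ν(G) - β(G)`. -/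
noncomputable def muGap (G : SimpleGraph V) : ℕ := nuNum G - betaNum G

/-- `M` covers the vertex set `S`. -/
def CoversSet (M : Finset (Sym2 V)) (S : Set V) : Prop := ∀ v ∈ S, Sat M v

/-- `S` is an equimatchable set in `G`: all maximal matchings of `G` covering `S`
have the same size. -/
def EquiSet (G : SimpleGraph V) (S : Set V) : Prop :=
  ∀ M M' : Finset (Sym2 V), IsMaximalMatchingIn G M → IsMaximalMatchingIn G M' →
    CoversSet M S → CoversSet M' S → M.card = M'.card

/-- The equimatchability defect `η(G)`: the minimum size of an equimatchable set in `G`. -/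
noncomputable def etaDefect (G : SimpleGraph V) : ℕ :=
  sInf {n | ∃ S : Set V, EquiSet G S ∧ S.ncard = n}

/-- The induced subgraph `G[S]` has a perfect matching: there is a matching of `G`
all of whose edges lie inside `S` and which saturates every vertex of `S`. -/
def HasPMOn (G : SimpleGraph V) (S : Set V) : Prop :=
  ∃ M : Finset (Sym2 V), IsMatchingIn G M ∧ (∀ e ∈ M, ∀ v : V, v ∈ e → v ∈ S) ∧
    ∀ v ∈ S, Sat M v

/-- `G` is expandable: for every two non-adjacent vertices `u`, `v`,
the graph `G - u - v` has a perfect matching. -/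
def Expandable (G : SimpleGraph V) : Prop :=
  ∀ u v : V, u ≠ v → ¬ G.Adj u v → HasPMOn G (Set.univ \ {u, v})

/-- The clique number `ω(G)`. -/
noncomputable def omegaNum (G : SimpleGraph V) : ℕ :=
  sSup {n | ∃ S : Set V, G.IsClique S ∧ S.ncard = n}

/-!
If `S` is equimatchable and `u, v ∉ S` were distinct and non-adjacent, a perfect matching of
`G - u - v` would be a maximal matching covering `S` one edge smaller than a perfect matching of
`G`; so `V \ S` is a clique and `|S| ≥ |V| - ω`. Conversely, a maximal matching covering the
complement of a clique `K` leaves at most one vertex of `K` uncovered (two uncovered vertices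
would be adjacent), so it has exactly `⌊|V|/2⌋` edges: `V \ K` is equimatchable.
-/

namespace IsMatchingIn

variable {G : SimpleGraph V} {M : Finset (Sym2 V)}

theorem ncard_setOf_sat (hM : IsMatchingIn G M) : {v | Sat M v}.ncard = 2 * M.card := by
  classical
  have hsat : {v | Sat M v} = ↑(M.biUnion Sym2.toFinset) := by
    ext v
    simp [Sat]
  rw [hsat, Set.ncard_coe_finset, Finset.card_biUnion, Finset.sum_congr rfl, Finset.sum_const,
    smul_eq_mul, mul_comm]
  · exact fun e he => Sym2.card_toFinset_of_not_isDiag e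
      (G.not_isDiag_of_mem_edgeSet (hM.1 e he))
  · intro e he f hf hef
    exact Finset.disjoint_left.2 fun v hve hvf =>
      hM.2 e he f hf hef v (Sym2.mem_toFinset.1 hve) (Sym2.mem_toFinset.1 hvf)

theorem insert_of_not_sat [DecidableEq V] {a b : V} (hM : IsMatchingIn G M) (hab : G.Adj a b)
    (ha : ¬ Sat M a) (hb : ¬ Sat M b) : IsMatchingIn G (insert s(a, b) M) := by
  have hfree : ∀ e ∈ M, ∀ w ∈ s(a, b), w ∉ e := by
    intro e he w hw hwe
    rcases Sym2.mem_iff.1 hw with rfl | rfl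
    exacts [ha ⟨e, he, hwe⟩, hb ⟨e, he, hwe⟩]
  refine ⟨fun e he => ?_, fun e he f hf hef w hwe hwf => ?_⟩
  · rcases Finset.mem_insert.1 he with rfl | he
    exacts [hab, hM.1 e he]
  · rcases Finset.mem_insert.1 he with rfl | he <;> rcases Finset.mem_insert.1 hf with rfl | hf
    · exact hef rfl
    · exact hfree f hf w hwe hwf
    · exact hfree e he w hwf hwe
    · exact hM.2 e he f hf hef w hwe hwf

theorem isMaximalMatchingIn (hM : IsMatchingIn G M)
    (h : ∀ a b, ¬ Sat M a → ¬ Sat M b → ¬ G.Adj a b) : IsMaximalMatchingIn G M := by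
  refine ⟨hM, fun M' hM' hsub => (Finset.Subset.antisymm ?_ hsub)⟩
  intro e he'
  by_contra he
  induction e with
  | _ a b =>
    have hfree : ∀ w ∈ s(a, b), ¬ Sat M w := fun w hw ⟨f, hf, hwf⟩ =>
      hM'.2 s(a, b) he' f (hsub hf) (by rintro rfl; exact he hf) w hw hwf
    exact h a b (hfree a (Sym2.mem_mk_left a b)) (hfree b (Sym2.mem_mk_right a b)) (hM'.1 _ he')

end IsMatchingIn

theorem IsMaximalMatchingIn.not_adj_of_not_sat {G : SimpleGraph V} {M : Finset (Sym2 V)}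
    {a b : V} (hM : IsMaximalMatchingIn G M) (ha : ¬ Sat M a) (hb : ¬ Sat M b) :
    ¬ G.Adj a b := by
  classical
  intro hab
  have hins := hM.2 _ (hM.1.insert_of_not_sat hab ha hb) (Finset.subset_insert _ _)
  exact ha ⟨s(a, b), hins ▸ Finset.mem_insert_self _ _, Sym2.mem_mk_left a b⟩

theorem bddAbove_ncard_isClique [Finite V] (G : SimpleGraph V) :
    BddAbove {n | ∃ S : Set V, G.IsClique S ∧ S.ncard = n} := by
  refine ⟨Nat.card V, ?_⟩
  rintro _ ⟨S, -, rfl⟩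
  exact Set.ncard_le_card S

theorem exists_isClique_ncard_eq_omegaNum [Finite V] (G : SimpleGraph V) :
    ∃ K, G.IsClique K ∧ K.ncard = omegaNum G :=
  Nat.sSup_mem (s := {n | ∃ S : Set V, G.IsClique S ∧ S.ncard = n})
    ⟨0, ∅, G.isClique_empty, Set.ncard_empty V⟩ (bddAbove_ncard_isClique G)

theorem ncard_le_omegaNum_of_isClique [Finite V] {G : SimpleGraph V} {K : Set V}
    (hK : G.IsClique K) : K.ncard ≤ omegaNum G :=
  le_csSup (s := {n | ∃ S : Set V, G.IsClique S ∧ S.ncard = n}) (bddAbove_ncard_isClique G)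
    ⟨K, hK, rfl⟩

variable {G : SimpleGraph V}

theorem HasPMOn.exists_isMaximalMatchingIn {S : Set V} (h : HasPMOn G S)
    (hS : G.IsIndepSet Sᶜ) :
    ∃ M, IsMaximalMatchingIn G M ∧ CoversSet M S ∧ 2 * M.card = S.ncard := by
  obtain ⟨M, hM, hinside, hcov⟩ := h
  have hsat : {v | Sat M v} = S :=
    Set.Subset.antisymm (fun v ⟨e, he, hve⟩ => hinside e he v hve) hcov
  refine ⟨M, hM.isMaximalMatchingIn fun a b ha hb hab => ?_, hcov, ?_⟩
  · exact hS (fun haS => ha (hcov a haS)) (fun hbS => hb (hcov b hbS)) hab.ne hab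
  · rw [← hM.ncard_setOf_sat, hsat]

theorem equiSet_compl_of_isClique [Finite V] {K : Set V} (hK : G.IsClique K) :
    EquiSet G Kᶜ := by
  suffices h : ∀ M, IsMaximalMatchingIn G M → CoversSet M Kᶜ → M.card = Nat.card V / 2 from
    fun M M' hM hM' hcov hcov' => (h M hM hcov).trans (h M' hM' hcov').symm
  intro M hM hcov
  have hunsat : {v | ¬ Sat M v}.Subsingleton := by
    intro a ha b hb
    by_contra hab
    have hK' : ∀ {v}, ¬ Sat M v → v ∈ K := fun hv => by_contra fun hvK => hv (hcov _ hvK)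
    exact hM.not_adj_of_not_sat ha hb (hK (hK' ha) (hK' hb) hab)
  have hsplit := Set.ncard_add_ncard_compl {v | Sat M v}
  rw [hM.1.ncard_setOf_sat] at hsplit
  have : {v | Sat M v}ᶜ.ncard ≤ 1 := Set.ncard_le_one_iff_subsingleton.2 hunsat
  omega

theorem isClique_compl_of_equiSet [Finite V] (hExp : Expandable G)
    (hPM : HasPMOn G Set.univ) {S : Set V} (hS : EquiSet G S) : G.IsClique Sᶜ := by
  intro u hu v hv huv
  by_contra hadj
  obtain ⟨M₀, hM₀, hcov₀, hcard₀⟩ :=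
    hPM.exists_isMaximalMatchingIn (by simp [IsIndepSet])
  have huvIndep : G.IsIndepSet (Set.univ \ {u, v})ᶜ := by
    rw [← Set.compl_eq_univ_sdiff, compl_compl]
    rintro a (rfl | rfl) b (rfl | rfl) hab <;> simp_all [G.adj_comm]
  obtain ⟨M₂, hM₂, hcov₂, hcard₂⟩ :=
    (hExp u v huv hadj).exists_isMaximalMatchingIn huvIndep
  have hcard := hS M₀ M₂ hM₀ hM₂ (fun w _ => hcov₀ w trivial)
    (fun w hw => hcov₂ w ⟨trivial, by rintro (rfl | rfl) <;> contradiction⟩)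
  have hpair : ({u, v} : Set V).ncard = 2 := Set.ncard_pair huv
  have hle : ({u, v} : Set V).ncard ≤ Nat.card V := Set.ncard_le_card _
  rw [Set.ncard_univ] at hcard₀
  rw [← Set.compl_eq_univ_sdiff, Set.ncard_compl] at hcard₂
  omega

theorem stmt_15 {V : Type*} [Fintype V] (G : SimpleGraph V)
    (hExp : Expandable G) (hPM : HasPMOn G (Set.univ : Set V)) :
    etaDefect G = Fintype.card V - omegaNum G := by
  have hsplit (S : Set V) : S.ncard + Sᶜ.ncard = Fintype.card V := by
    rw [Set.ncard_add_ncard_compl, Nat.card_eq_fintype_card]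
  obtain ⟨K, hK, hKcard⟩ := exists_isClique_ncard_eq_omegaNum G
  have hKc : Kᶜ.ncard = Fintype.card V - omegaNum G := by have := hsplit K; omega
  have hKeq : Fintype.card V - omegaNum G ∈ {n | ∃ S : Set V, EquiSet G S ∧ S.ncard = n} :=
    ⟨Kᶜ, equiSet_compl_of_isClique hK, hKc⟩
  obtain ⟨S, hS, hScard⟩ : etaDefect G ∈ {n | ∃ S : Set V, EquiSet G S ∧ S.ncard = n} :=
    Nat.sInf_mem ⟨_, hKeq⟩
  refine le_antisymm (Nat.sInf_le hKeq) ?_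
  have hSc := ncard_le_omegaNum_of_isClique (isClique_compl_of_equiSet hExp hPM hS)
  have := hsplit S
  omega
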